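/- Edge-potential characterization of equal path products on a layered complete graph: let G be an L-partite graph with parts V_0,...,V_L and all edges between consecutive parts, and let f: E → R. Then Σ_{e ∈ p} f(e) = 0 for every path p choosing one vertex per part if and only if there exists λ: V → R with λ ≡ 0 on V_0 ∪ V_L and f(u,v) = λ(v) − λ(u) for every edge (u,v) between consecutive parts. -/

import Mathlib

/-!
Write `Sₖ(p)` for the sum of `f` over the first `k` edges of a path `p`. If every path sum vanishes,
then `Sₖ(p)` depends only on the vertices of `p` up to layer `k` and, being minus the sum over the
remaining edges, also only on the vertices from layer `k` on. Splicing two paths at layer `k`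
shows that `Sₖ(p)` depends only on `p k`; this value is the potential `λ(k, p k)`, and the edge
identity is `Sₖ₊₁(p) = Sₖ(p) + f(p k, p (k + 1))`. Conversely, the sum along a path of a
difference of potentials telescopes.
-/

open Finset

section PathSums

variable {L : ℕ} {V : Fin (L + 1) → Type*} {M : Type*} [AddCommGroup M]

def pathSum (f : (Σ l : Fin L, V l.castSucc × V l.succ) → M) (p : ∀ l, V l) : M :=
  ∑ l : Fin L, f ⟨l, (p l.castSucc, p l.succ)⟩

def prefixSum (f : (Σ l : Fin L, V l.castSucc × V l.succ) → M) (p : ∀ l, V l)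
    (k : Fin (L + 1)) : M :=
  ∑ l with l.castSucc < k, f ⟨l, (p l.castSucc, p l.succ)⟩

variable (f : (Σ l : Fin L, V l.castSucc × V l.succ) → M)

@[simp]
lemma prefixSum_zero (p : ∀ l, V l) : prefixSum f p 0 = 0 := by
  simp [prefixSum]

lemma prefixSum_last (p : ∀ l, V l) : prefixSum f p (Fin.last L) = pathSum f p := by
  simp [prefixSum, pathSum, Fin.castSucc_lt_last]

lemma prefixSum_succ (p : ∀ l, V l) (l : Fin L) :
    prefixSum f p l.succ = prefixSum f p l.castSucc + f ⟨l, (p l.castSucc, p l.succ)⟩ := by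
  have hfilter : univ.filter (fun j : Fin L => j.castSucc < l.succ)
      = insert l (univ.filter fun j : Fin L => j.castSucc < l.castSucc) := by
    ext j
    simp only [mem_filter, mem_insert, mem_univ, true_and, Fin.castSucc_lt_succ_iff,
      Fin.castSucc_lt_castSucc_iff]
    exact le_iff_eq_or_lt
  rw [prefixSum, hfilter, sum_insert (by simp), prefixSum, add_comm]

lemma prefixSum_congr {p q : ∀ l, V l} {k : Fin (L + 1)} (hpq : ∀ j ≤ k, p j = q j) :
    prefixSum f p k = prefixSum f q k := by
  refine sum_congr rfl fun j hj => ?_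
  have hjk : j.castSucc < k := (mem_filter.mp hj).2
  rw [hpq _ hjk.le, hpq _ (Fin.castSucc_lt_iff_succ_le.mp hjk)]

lemma pathSum_sub_prefixSum_congr {p q : ∀ l, V l} {k : Fin (L + 1)}
    (hpq : ∀ j, k ≤ j → p j = q j) :
    pathSum f p - prefixSum f p k = pathSum f q - prefixSum f q k := by
  simp only [pathSum, prefixSum, ← sum_filter_not_add_sum_filter univ (fun l : Fin L => l.castSucc < k),
    add_sub_cancel_right]
  refine sum_congr rfl fun j hj => ?_
  have hkj : k ≤ j.castSucc := not_lt.mp (mem_filter.mp hj).2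
  rw [hpq _ hkj, hpq _ (hkj.trans (Fin.castSucc_le_succ j))]

lemma prefixSum_eq_of_apply_eq (hf : ∀ p, pathSum f p = 0) {p q : ∀ l, V l}
    {k : Fin (L + 1)} (hpq : p k = q k) : prefixSum f p k = prefixSum f q k := by
  let r : ∀ l, V l := fun j => if j ≤ k then p j else q j
  have hpr : prefixSum f p k = prefixSum f r k :=
    prefixSum_congr f fun j hj => (if_pos hj).symm
  have hrq : pathSum f r - prefixSum f r k = pathSum f q - prefixSum f q k := by
    refine pathSum_sub_prefixSum_congr f fun j hkj => ?_
    by_cases hjk : j ≤ k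
    · obtain rfl := le_antisymm hjk hkj
      exact (if_pos hjk).trans hpq
    · exact if_neg hjk
  rw [hf, hf, zero_sub, zero_sub, neg_inj] at hrq
  rw [hpr, hrq]

lemma prefixSum_eq_sub_of_forall_eq_sub (lam : (Σ l, V l) → M)
    (hf : ∀ l u v, f ⟨l, (u, v)⟩ = lam ⟨l.succ, v⟩ - lam ⟨l.castSucc, u⟩) (p : ∀ l, V l)
    (k : Fin (L + 1)) : prefixSum f p k = lam ⟨k, p k⟩ - lam ⟨0, p 0⟩ := by
  induction k using Fin.induction with
  | zero => simp
  | succ l ih => rw [prefixSum_succ, ih, hf]; abel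

lemma pathSum_eq_sub_of_forall_eq_sub (lam : (Σ l, V l) → M)
    (hf : ∀ l u v, f ⟨l, (u, v)⟩ = lam ⟨l.succ, v⟩ - lam ⟨l.castSucc, u⟩) (p : ∀ l, V l) :
    pathSum f p = lam ⟨Fin.last L, p (Fin.last L)⟩ - lam ⟨0, p 0⟩ := by
  rw [← prefixSum_last, prefixSum_eq_sub_of_forall_eq_sub f lam hf]

def potential (b : ∀ l, V l) (x : Σ l, V l) : M :=
  prefixSum f (Function.update b x.1 x.2) x.1

lemma potential_eq_prefixSum (hf : ∀ p, pathSum f p = 0) (b : ∀ l, V l) {p : ∀ l, V l}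
    {k : Fin (L + 1)} {v : V k} (hp : p k = v) : potential f b ⟨k, v⟩ = prefixSum f p k :=
  prefixSum_eq_of_apply_eq f hf (by rw [Function.update_self, hp])

theorem pathSum_eq_zero_iff_exists_potential [∀ l, Nonempty (V l)] :
    (∀ p, pathSum f p = 0) ↔
      ∃ lam : (Σ l, V l) → M, (∀ i, lam ⟨0, i⟩ = 0) ∧ (∀ i, lam ⟨Fin.last L, i⟩ = 0) ∧
        ∀ l u v, f ⟨l, (u, v)⟩ = lam ⟨l.succ, v⟩ - lam ⟨l.castSucc, u⟩ := by
  constructor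
  · intro hf
    obtain ⟨b⟩ : Nonempty (∀ l, V l) := inferInstance
    refine ⟨potential f b, fun i => prefixSum_zero f _, fun i => ?_, fun l u v => ?_⟩
    · rw [potential, prefixSum_last, hf]
    · let q := Function.update (Function.update b l.castSucc u) l.succ v
      have hu : q l.castSucc = u :=
        (Function.update_of_ne Fin.castSucc_lt_succ.ne _ _).trans (Function.update_self ..)
      have hv : q l.succ = v := Function.update_self ..
      rw [potential_eq_prefixSum f hf b hu, potential_eq_prefixSum f hf b hv, prefixSum_succ,
        hu, hv, add_sub_cancel_left]
  · rintro ⟨lam, h0, hlast, hf⟩ p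
    rw [pathSum_eq_sub_of_forall_eq_sub f lam hf, h0, hlast, sub_zero]

end PathSums

theorem edge_potential_characterization_general (L : ℕ)
    (h : Fin (L + 1) → ℕ) (hh : ∀ l, 1 ≤ h l)
    (f : (Σ l : Fin L, Fin (h l.castSucc) × Fin (h l.succ)) → ℝ) :
    (∀ p : ∀ l : Fin (L + 1), Fin (h l),
        ∑ l : Fin L, f ⟨l, (p l.castSucc, p l.succ)⟩ = 0) ↔
      ∃ lam : (Σ l : Fin (L + 1), Fin (h l)) → ℝ,
        (∀ i : Fin (h 0), lam ⟨0, i⟩ = 0) ∧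
        (∀ i : Fin (h (Fin.last L)), lam ⟨Fin.last L, i⟩ = 0) ∧
        (∀ (l : Fin L) (u : Fin (h l.castSucc)) (v : Fin (h l.succ)),
          f ⟨l, (u, v)⟩ = lam ⟨l.succ, v⟩ - lam ⟨l.castSucc, u⟩) :=
  have : ∀ l, Nonempty (Fin (h l)) := fun l => ⟨⟨0, hh l⟩⟩
  pathSum_eq_zero_iff_exists_potential (V := fun l => Fin (h l)) f

/-- edge-potential characterization of vanishing path sums on a layered
complete `L`-partite graph (`L ≥ 2`) with nonempty parts `V_l = Fin (h l)`:
a function `f` on edges has `∑_{e ∈ p} f(e) = 0` for every path `p` choosing one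
vertex per part iff there is `λ` on vertices, vanishing on `V_0` and `V_L`, with
`f(u,v) = λ(v) − λ(u)` on every edge between consecutive parts. -/
theorem edge_potential_characterization (L : ℕ) (hL : 2 ≤ L)
    (h : Fin (L + 1) → ℕ) (hh : ∀ l, 1 ≤ h l)
    (f : (Σ l : Fin L, Fin (h l.castSucc) × Fin (h l.succ)) → ℝ) :
    (∀ p : ∀ l : Fin (L + 1), Fin (h l),
        ∑ l : Fin L, f ⟨l, (p l.castSucc, p l.succ)⟩ = 0) ↔
      ∃ lam : (Σ l : Fin (L + 1), Fin (h l)) → ℝ,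
        (∀ i : Fin (h 0), lam ⟨0, i⟩ = 0) ∧
        (∀ i : Fin (h (Fin.last L)), lam ⟨Fin.last L, i⟩ = 0) ∧
        (∀ (l : Fin L) (u : Fin (h l.castSucc)) (v : Fin (h l.succ)),
          f ⟨l, (u, v)⟩ = lam ⟨l.succ, v⟩ - lam ⟨l.castSucc, u⟩) :=
  edge_potential_characterization_general L h hh f
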